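/- arXiv:2211.13831 — 3 statements merged into one kernel-verified Lean document; each statement's English description precedes it below -/
import Mathlib

section
/- Let θ : ℕ → ℝ with θ_j > 0 for all j. For each i ≥ 2 define γ_{i,n} for n ≥ i by: γ_{i,i} = (i−1)/(i−1+θ_i), γ_{i,i+1} = γ_{i,i} · i/(i+θ_{i+1}), and γ_{i,n} = ((n−1)/(n−1+θ_n)) · ( γ_{i,n−1} + (θ_{n−1}/(n−2+θ_{n−1}))·γ_{i,n−2} ) for n ≥ i+2. Then the following are equivalent: (a) Σ_{j=1}^{∞} θ_j·θ_{j+1} / ( (j−1+θ_j)(j+θ_{j+1}) ) < ∞ and θ_n/n → 0 as n → ∞; (b) for every i ≥ 2, the limit γ_{i,∞} := lim_{n→∞} γ_{i,n} exists and is strictly positive. -/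
/-!
Write `p n = θ n / (n - 1 + θ n)` for the probability that `Y n = 1`. Then
`a n = γ (n + 1) + p (n + 1) γ n` is the probability that `Y` has no two adjacent ones up to
`n + 1`, with `Y (n + 1)` left free; it decreases, by exactly `p (n + 1) p (n + 2) γ n`, to a limit
`A`, and `γ (n + 2) = (1 - p (n + 2)) a n`.

If `∑ p (n + 1) p (n + 2) < ∞` and `p n → 0`, then `γ → A`, and `A > 0` because, once
`p ≤ 1/2`, each decrement of `a` is at most `2 a_M p (n + 1) p (n + 2)` past a point `M` whose
tail sum is below `1/2`. Conversely, if `γ → L > 0`, then `p (n + 1) = (a n - γ (n + 1)) / γ n`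
tends to `ρ = (A - L) / L` while `L = (1 - ρ) A`, which forces `A = L` and `ρ = 0`; the
decrements of `a` are summable and bounded below by `(L / 2) p (n + 1) p (n + 2)`.
-/

open Finset Filter Topology

lemma hasSum_sub_succ_of_antitone {f : ℕ → ℝ} {A : ℝ} (hf : Antitone f)
    (hA : Tendsto f atTop (𝓝 A)) : HasSum (fun n => f n - f (n + 1)) (f 0 - A) := by
  rw [hasSum_iff_tendsto_nat_of_nonneg (fun n => sub_nonneg.2 (hf n.le_succ))]
  simp_rw [sum_range_sub']
  exact tendsto_const_nhds.sub hA

structure IsFellerRecursion (p γ : ℕ → ℝ) : Prop where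
  prob_nonneg : ∀ n, 0 ≤ p n
  prob_lt_one : ∀ n, p n < 1
  pos_zero : 0 < γ 0
  pos_one : 0 < γ 1
  succ_succ : ∀ n, γ (n + 2) = (1 - p (n + 2)) * (γ (n + 1) + p (n + 1) * γ n)

def freeEnd (p γ : ℕ → ℝ) (n : ℕ) : ℝ := γ (n + 1) + p (n + 1) * γ n

namespace IsFellerRecursion

variable {p γ : ℕ → ℝ} (h : IsFellerRecursion p γ)
include h

lemma pos (n : ℕ) : 0 < γ n := by
  suffices ∀ n, 0 < γ n ∧ 0 < γ (n + 1) from (this n).1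
  intro n
  induction n with
  | zero => exact ⟨h.pos_zero, h.pos_one⟩
  | succ n ih =>
    refine ⟨ih.2, ?_⟩
    rw [h.succ_succ]
    exact mul_pos (sub_pos.2 (h.prob_lt_one _))
      (add_pos_of_pos_of_nonneg ih.2 (mul_nonneg (h.prob_nonneg _) ih.1.le))

lemma freeEnd_pos (n : ℕ) : 0 < freeEnd p γ n :=
  add_pos_of_pos_of_nonneg (h.pos _) (mul_nonneg (h.prob_nonneg _) (h.pos _).le)

lemma eq_mul_freeEnd (n : ℕ) : γ (n + 2) = (1 - p (n + 2)) * freeEnd p γ n :=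
  h.succ_succ n

lemma freeEnd_succ (n : ℕ) :
    freeEnd p γ (n + 1) = freeEnd p γ n - p (n + 1) * p (n + 2) * γ n := by
  simp only [freeEnd, h.eq_mul_freeEnd n]
  ring

lemma antitone_freeEnd : Antitone (freeEnd p γ) :=
  antitone_nat_of_succ_le fun n => by
    rw [h.freeEnd_succ]
    have := mul_nonneg (mul_nonneg (h.prob_nonneg (n + 1)) (h.prob_nonneg (n + 2))) (h.pos n).le
    linarith

lemma tendsto_freeEnd : Tendsto (freeEnd p γ) atTop (𝓝 (⨅ n, freeEnd p γ n)) :=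
  tendsto_atTop_ciInf h.antitone_freeEnd ⟨0, by
    rintro _ ⟨n, rfl⟩
    exact (h.freeEnd_pos n).le⟩

lemma mul_le_freeEnd (n : ℕ) : (1 - p (n + 2)) * γ (n + 1) ≤ freeEnd p γ (n + 1) := by
  have hγ : γ (n + 1) ≤ freeEnd p γ n :=
    le_add_of_nonneg_right (mul_nonneg (h.prob_nonneg _) (h.pos _).le)
  calc (1 - p (n + 2)) * γ (n + 1) ≤ (1 - p (n + 2)) * freeEnd p γ n :=
        mul_le_mul_of_nonneg_left hγ (sub_pos.2 (h.prob_lt_one _)).le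
    _ = γ (n + 2) := (h.eq_mul_freeEnd n).symm
    _ ≤ freeEnd p γ (n + 1) :=
        le_add_of_nonneg_right (mul_nonneg (h.prob_nonneg _) (h.pos _).le)

lemma tendsto_of_summable (hsum : Summable fun n => p (n + 1) * p (n + 2))
    (hp : Tendsto p atTop (𝓝 0)) : ∃ L, 0 < L ∧ Tendsto γ atTop (𝓝 L) := by
  set A := ⨅ n, freeEnd p γ n
  have hq : Tendsto (fun n => 1 - p (n + 2)) atTop (𝓝 1) := by
    simpa using tendsto_const_nhds.sub (hp.comp (tendsto_add_atTop_nat 2))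
  have hγA : Tendsto γ atTop (𝓝 A) := by
    rw [← tendsto_add_atTop_iff_nat 2]
    simpa [← h.eq_mul_freeEnd] using hq.mul h.tendsto_freeEnd
  refine ⟨A, ?_, hγA⟩
  set c := fun n => p (n + 1) * p (n + 2)
  obtain ⟨N, hN⟩ :=
    eventually_atTop.1 (hp.eventually (ge_mem_nhds (by norm_num : (0 : ℝ) < 1 / 2)))
  obtain ⟨M, hMN, htail⟩ := ((eventually_ge_atTop (N + 1)).and
    ((tendsto_sum_nat_add c).eventually_lt_const (by norm_num : (0 : ℝ) < 1 / 2))).exists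
  set t := ∑' n, c (n + M)
  have hγ_le (n : ℕ) : γ (n + M) ≤ 2 * freeEnd p γ M := by
    obtain ⟨m, hm⟩ : ∃ m, n + M = m + 1 := ⟨n + M - 1, by omega⟩
    rw [hm]
    have hpm := hN (m + 2) (by omega)
    have hγa := h.mul_le_freeEnd m
    have haM : freeEnd p γ (m + 1) ≤ freeEnd p γ M := h.antitone_freeEnd (by omega)
    nlinarith [h.pos (m + 1)]
  have hdec : freeEnd p γ M - A ≤ 2 * freeEnd p γ M * t := by
    have htel := hasSum_sub_succ_of_antitone (f := fun n => freeEnd p γ (n + M))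
      (h.antitone_freeEnd.comp_monotone fun _ _ hmn => by omega)
      ((tendsto_add_atTop_iff_nat M).2 h.tendsto_freeEnd)
    rw [zero_add] at htel
    refine hasSum_le (fun n => ?_) htel
      (((summable_nat_add_iff M).2 hsum).hasSum.mul_left (2 * freeEnd p γ M))
    rw [show n + 1 + M = n + M + 1 by omega, h.freeEnd_succ]
    have := mul_le_mul_of_nonneg_left (hγ_le n)
      (mul_nonneg (h.prob_nonneg (n + M + 1)) (h.prob_nonneg (n + M + 2)))
    simp only [c]
    linarith
  calc 0 < freeEnd p γ M * (1 - 2 * t) := mul_pos (h.freeEnd_pos M) (by linarith)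
    _ ≤ A := by linarith

lemma tendsto_prob_zero_of_tendsto {L : ℝ} (hL : 0 < L) (hγ : Tendsto γ atTop (𝓝 L)) :
    Tendsto p atTop (𝓝 0) := by
  set A := ⨅ n, freeEnd p γ n
  have hA := h.tendsto_freeEnd
  set ρ := (A - L) / L
  have hp : Tendsto (fun n => p (n + 1)) atTop (𝓝 ρ) := by
    refine ((hA.sub (hγ.comp (tendsto_add_atTop_nat 1))).div hγ hL.ne').congr fun n => ?_
    change (freeEnd p γ n - γ (n + 1)) / γ n = p (n + 1)
    rw [freeEnd, add_sub_cancel_left, mul_div_assoc, div_self (h.pos n).ne', mul_one]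
  have hLA : (1 - ρ) * A = L := by
    refine tendsto_nhds_unique ((tendsto_const_nhds.sub
      (hp.comp (tendsto_add_atTop_nat 1))).mul hA) ?_
    simpa [← h.eq_mul_freeEnd] using (tendsto_add_atTop_iff_nat 2).2 hγ
  have hρ : ρ = 0 := by
    have hAL : A = L := by
      simp only [ρ] at hLA
      field_simp at hLA
      nlinarith [sq_nonneg (A - L)]
    simp [ρ, hAL]
  rw [← tendsto_add_atTop_iff_nat 1, ← hρ]
  exact hp

lemma summable_of_tendsto {L : ℝ} (hL : 0 < L) (hγ : Tendsto γ atTop (𝓝 L)) :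
    Summable fun n => p (n + 1) * p (n + 2) := by
  have hdec : Summable fun n => p (n + 1) * p (n + 2) * γ n := by
    refine (hasSum_sub_succ_of_antitone h.antitone_freeEnd h.tendsto_freeEnd).summable.congr
      fun n => ?_
    rw [h.freeEnd_succ]
    ring
  refine hdec.mul_left (2 / L) |>.of_norm_bounded_eventually_nat ?_
  filter_upwards [hγ.eventually_const_lt (half_lt_self hL)] with n hn
  have hc := mul_nonneg (h.prob_nonneg (n + 1)) (h.prob_nonneg (n + 2))
  rw [Real.norm_of_nonneg hc, div_mul_eq_mul_div, le_div_iff₀ hL]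
  nlinarith

end IsFellerRecursion

noncomputable def fellerProb (θ : ℕ → ℝ) (n : ℕ) : ℝ := θ n / (n - 1 + θ n)

section fellerProb

variable {θ : ℕ → ℝ} {n : ℕ}

lemma fellerProb_nonneg (hθ : 0 < θ n) (hn : 1 ≤ n) : 0 ≤ fellerProb θ n := by
  have : (1 : ℝ) ≤ n := by exact_mod_cast hn
  unfold fellerProb
  positivity

lemma one_sub_fellerProb (hθ : 0 < θ n) (hn : 1 ≤ n) :
    1 - fellerProb θ n = (n - 1) / (n - 1 + θ n) := by
  have : (1 : ℝ) ≤ n := by exact_mod_cast hn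
  rw [fellerProb, eq_div_iff (by linarith), sub_mul, div_mul_cancel₀ _ (by linarith)]
  ring

lemma fellerProb_lt_one (hθ : 0 < θ n) (hn : 2 ≤ n) : fellerProb θ n < 1 := by
  have : (2 : ℝ) ≤ n := by exact_mod_cast hn
  have := one_sub_fellerProb hθ (by omega)
  have : 0 < ((n : ℝ) - 1) / (n - 1 + θ n) := div_pos (by linarith) (by linarith)
  linarith

lemma fellerProb_mul_fellerProb (j : ℕ) :
    fellerProb θ (j + 1) * fellerProb θ (j + 2)
      = θ (j + 1) * θ (j + 2) / (((j : ℝ) + θ (j + 1)) * ((j : ℝ) + 1 + θ (j + 2))) := by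
  rw [fellerProb, fellerProb, div_mul_div_comm]
  push_cast
  ring_nf

lemma tendsto_fellerProb_zero_iff (hθ : ∀ n, 1 ≤ n → 0 < θ n) :
    Tendsto (fellerProb θ) atTop (𝓝 0) ↔
      Tendsto (fun n : ℕ => θ n / n) atTop (𝓝 0) := by
  have hfrac : Tendsto (fun n : ℕ => ((n : ℝ) - 1) / n) atTop (𝓝 1) := by
    have h := (tendsto_const_nhds (x := (1 : ℝ))).sub
      (tendsto_one_div_atTop_nhds_zero_nat (𝕜 := ℝ))
    rw [sub_zero] at h
    refine h.congr' ?_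
    filter_upwards [eventually_ge_atTop 1] with n hn
    have : (n : ℝ) ≠ 0 := Nat.cast_ne_zero.2 (by omega)
    field_simp
  constructor
  · intro hp
    have h := (hp.div ((tendsto_const_nhds (x := (1 : ℝ))).sub hp) (by norm_num)).mul hfrac
    rw [zero_div, zero_mul] at h
    refine h.congr' ?_
    filter_upwards [eventually_ge_atTop 2] with n hn
    have : (2 : ℝ) ≤ n := by exact_mod_cast hn
    have : (n : ℝ) - 1 ≠ 0 := by linarith
    have hθn := hθ n (by omega)
    have : (n : ℝ) - 1 + θ n ≠ 0 := by linarith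
    simp only [Pi.div_apply]
    rw [one_sub_fellerProb hθn (by omega), fellerProb]
    field_simp
  · intro hx
    have h := hx.div (hfrac.add hx) (by norm_num)
    rw [zero_div] at h
    refine h.congr' ?_
    filter_upwards [eventually_ge_atTop 1] with n hn
    have : (1 : ℝ) ≤ n := by exact_mod_cast hn
    have := hθ n hn
    simp only [Pi.div_apply]
    rw [fellerProb]
    field_simp

lemma isFellerRecursion_fellerProb (hθ : ∀ n, 1 ≤ n → 0 < θ n) {γ : ℕ → ℝ} {i : ℕ}
    (hi : 2 ≤ i) (hγ0 : γ i = ((i : ℝ) - 1) / ((i : ℝ) - 1 + θ i))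
    (hγ1 : γ (i + 1) = γ i * (i : ℝ) / ((i : ℝ) + θ (i + 1)))
    (hrec : ∀ n : ℕ, i + 2 ≤ n → γ n = (((n : ℝ) - 1) / ((n : ℝ) - 1 + θ n))
        * (γ (n - 1) + (θ (n - 1) / ((n : ℝ) - 2 + θ (n - 1))) * γ (n - 2))) :
    IsFellerRecursion (fun k => fellerProb θ (k + i)) (fun k => γ (k + i)) := by
  have hi' : (2 : ℝ) ≤ i := by exact_mod_cast hi
  have hγi : 0 < γ i := by
    rw [hγ0]
    exact div_pos (by linarith) (by linarith [hθ i (by omega)])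
  refine ⟨fun k => fellerProb_nonneg (hθ _ (by omega)) (by omega),
    fun k => fellerProb_lt_one (hθ _ (by omega)) (by omega), by simpa using hγi, ?_,
    fun k => ?_⟩
  · rw [add_comm, hγ1]
    have := hθ (i + 1) (by omega)
    positivity
  · rw [hrec _ (by omega), one_sub_fellerProb (hθ _ (by omega)) (by omega),
      show k + 2 + i - 1 = k + 1 + i by omega, show k + 2 + i - 2 = k + i by omega, fellerProb]
    push_cast
    ring

end fellerProb

/-- the limits `γ_{i,∞}` of the no-adjacent-ones probabilities
`γ_{i,n}` of the generalized Feller coupling exist and are positive iff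
`∑ θ_j θ_{j+1}/((j-1+θ_j)(j+θ_{j+1})) < ∞` and `θ_n/n → 0`. -/
theorem stmt16 (θ : ℕ → ℝ) (hθpos : ∀ j, 1 ≤ j → 0 < θ j)
    (g : ℕ → ℕ → ℝ)
    (hg0 : ∀ i : ℕ, 2 ≤ i → g i i = ((i : ℝ) - 1) / ((i : ℝ) - 1 + θ i))
    (hg1 : ∀ i : ℕ, 2 ≤ i → g i (i + 1) = g i i * (i : ℝ) / ((i : ℝ) + θ (i + 1)))
    (hgrec : ∀ i : ℕ, 2 ≤ i → ∀ n : ℕ, i + 2 ≤ n →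
      g i n = (((n : ℝ) - 1) / ((n : ℝ) - 1 + θ n))
        * (g i (n - 1) + (θ (n - 1) / ((n : ℝ) - 2 + θ (n - 1))) * g i (n - 2))) :
    ((Summable (fun j : ℕ => θ (j + 1) * θ (j + 2)
        / (((j : ℝ) + θ (j + 1)) * ((j : ℝ) + 1 + θ (j + 2)))) ∧
      Tendsto (fun n : ℕ => θ n / n) atTop (nhds 0)) ↔
    (∀ i : ℕ, 2 ≤ i → ∃ L : ℝ, 0 < L ∧ Tendsto (fun n : ℕ => g i n) atTop (nhds L))) := by
  have hfeller (i : ℕ) (hi : 2 ≤ i) :=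
    isFellerRecursion_fellerProb hθpos hi (hg0 i hi) (hg1 i hi) (hgrec i hi)
  simp_rw [← fellerProb_mul_fellerProb, ← tendsto_fellerProb_zero_iff hθpos]
  constructor
  · rintro ⟨hsum, hp⟩ i hi
    obtain ⟨L, hL, hlim⟩ := (hfeller i hi).tendsto_of_summable
      (by simpa only [add_right_comm] using (summable_nat_add_iff i).2 hsum)
      ((tendsto_add_atTop_iff_nat i).2 hp)
    exact ⟨L, hL, (tendsto_add_atTop_iff_nat i).1 hlim⟩
  · intro h
    obtain ⟨L, hL, hlim⟩ := h 2 le_rfl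
    have hlim₂ := (tendsto_add_atTop_iff_nat 2).2 hlim
    exact ⟨(summable_nat_add_iff 2).1 (by
        simpa only [add_right_comm] using (hfeller 2 le_rfl).summable_of_tendsto hL hlim₂),
      (tendsto_add_atTop_iff_nat 2).1
        ((hfeller 2 le_rfl).tendsto_prob_zero_of_tendsto hL hlim₂)⟩
end

section
/- Let θ : ℕ → ℝ with θ_i > 0 for all i and θ_n → θ > 0 as n → ∞, and set θ_{<n>} := Π_{k=1}^{n} (θ_k + k − 1). Fix r ≥ 1 and real numbers x_1, …, x_r > 0 with x_1 + ⋯ + x_r < 1. For n set a_i := ⌊n·x_i⌋ and m := a_1 + ⋯ + a_r. Then, as n → ∞, n^r · ( n!·θ_{<n−m>} / ( (n−m)!·θ_{<n>} ) ) · ( Π_{j=1}^{r} θ_{n+1−(a_1+⋯+a_j)} ) / ( n·(n−a_1)·(n−a_1−a_2)⋯(n−a_1−⋯−a_{r−1}) ) → θ^r · (1 − x_1 − ⋯ − x_r)^{θ−1} / ( (1−x_1)(1−x_1−x_2)⋯(1−x_1−⋯−x_{r−1}) ). -/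
/-
The ratio `n! θ_{<n-m>} / ((n-m)! θ_{<n>})` is the product of `k / (θ_k + k - 1)` over
`n - m < k ≤ n`. Since `k log (k / (θ_k + k - 1)) → 1 - ϑ`, each logarithm differs from
`(1 - ϑ) (log k - log (k - 1))` by `o(1/k)`; the `m = O(n - m)` errors sum to `o(1)` and the main
terms telescope, so the product tends to `(1 - ∑ x)^(ϑ - 1)`. The remaining factors converge
termwise: the indices of the `θ`-factors are at least `n - m → ∞`, and
`n / (n - a_1 - ⋯ - a_{j-1}) → 1 / (1 - x_1 - ⋯ - x_{j-1})`.
-/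

open Finset Filter Real Topology

lemma tendsto_mul_log_one_add_div {a : ℕ → ℝ} {α : ℝ} (ha : Tendsto a atTop (𝓝 α)) :
    Tendsto (fun k : ℕ => k * log (1 + a k / k)) atTop (𝓝 α) := by
  have hsmall : Tendsto (fun k : ℕ => a k / k) atTop (𝓝 0) :=
    ha.div_atTop tendsto_natCast_atTop_atTop
  have hlower : Tendsto (fun k : ℕ => a k / (1 + a k / k)) atTop (𝓝 α) := by
    have h := ha.div (tendsto_const_nhds.add hsmall) (show (1 : ℝ) + 0 ≠ 0 by norm_num)
    rwa [add_zero, div_one] at h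
  have hpos : ∀ᶠ k : ℕ in atTop, 0 < k ∧ 0 < 1 + a k / k := by
    filter_upwards [eventually_gt_atTop 0, hsmall.eventually (lt_mem_nhds neg_one_lt_zero)]
      with k hk h
    exact ⟨hk, by linarith⟩
  refine tendsto_of_tendsto_of_tendsto_of_le_of_le' hlower ha ?_ ?_
  all_goals filter_upwards [hpos] with k ⟨hk, hy⟩
  · have hk' : (0 : ℝ) < k := by exact_mod_cast hk
    have hak : (k : ℝ) + a k ≠ 0 := by
      rw [one_add_div hk'.ne'] at hy
      exact (div_pos_iff_of_pos_right hk').1 hy |>.ne'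
    calc a k / (1 + a k / k) = k * (1 - (1 + a k / k)⁻¹) := by
          rw [one_add_div hk'.ne', inv_div]; field_simp; ring
      _ ≤ k * log (1 + a k / k) := by gcongr; exact one_sub_inv_le_log_of_pos hy
  · calc k * log (1 + a k / k) ≤ k * (1 + a k / k - 1) := by
          gcongr; exact log_le_sub_one_of_pos hy
      _ = a k := by field_simp; ring

lemma tendsto_mul_log_sub_log_sub_one :
    Tendsto (fun k : ℕ => k * (log k - log ((k : ℝ) - 1))) atTop (𝓝 1) := by
  have h := (tendsto_mul_log_one_add_div (tendsto_const_nhds (x := (-1 : ℝ)))).neg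
  rw [neg_neg] at h
  refine h.congr' ?_
  filter_upwards [eventually_ge_atTop 2] with k hk
  have hk : (1 : ℝ) < k := by exact_mod_cast hk
  rw [show 1 + -1 / (k : ℝ) = (k - 1) / k by field_simp; ring,
    log_div (by linarith) (by linarith)]
  ring

lemma sum_Ioc_log_sub_log_sub_one {A n : ℕ} (h : A ≤ n) :
    ∑ k ∈ Ioc A n, (log k - log ((k : ℝ) - 1)) = log n - log A := by
  induction n, h using Nat.le_induction with
  | base => simp
  | succ n h ih => rw [sum_Ioc_succ_top h, ih]; push_cast; rw [add_sub_cancel_right]; ring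

lemma tendsto_sum_Ioc_of_tendsto_mul {E : ℕ → ℝ}
    (hE : Tendsto (fun k : ℕ => k * E k) atTop (𝓝 0)) {A : ℕ → ℕ} (hA : Tendsto A atTop atTop)
    {C : ℝ} (hC : ∀ᶠ n : ℕ in atTop, (n : ℝ) ≤ C * A n) :
    Tendsto (fun n => ∑ k ∈ Ioc (A n) n, E k) atTop (𝓝 0) := by
  rw [Metric.tendsto_nhds]
  intro ε hε
  set δ := ε / (|C| + 1)
  have hδ : 0 < δ := by positivity
  obtain ⟨K, hK⟩ := eventually_atTop.1 (Metric.tendsto_nhds.1 hE δ hδ)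
  filter_upwards [hA.eventually_ge_atTop (K + 1), hC] with n hAK hn
  have hA0 : (0 : ℝ) < A n := by exact_mod_cast (show 0 < A n by omega)
  have hterm : ∀ k ∈ Ioc (A n) n, ‖E k‖ ≤ δ / A n := by
    intro k hk
    have hk := mem_Ioc.1 hk
    have hk0 : (0 : ℝ) < k := by exact_mod_cast (show 0 < k by omega)
    have hkE := hK k (by omega)
    rw [dist_zero_right, norm_mul, Real.norm_of_nonneg hk0.le] at hkE
    calc ‖E k‖ ≤ δ / k := by rw [le_div_iff₀ hk0]; linarith
      _ ≤ δ / A n := div_le_div_of_nonneg_left hδ.le hA0 (by exact_mod_cast hk.1.le)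
  calc dist (∑ k ∈ Ioc (A n) n, E k) 0 ≤ ∑ k ∈ Ioc (A n) n, ‖E k‖ := by
        rw [dist_zero_right]; exact norm_sum_le _ _
    _ ≤ #(Ioc (A n) n) • (δ / A n) := sum_le_card_nsmul _ _ _ hterm
    _ ≤ n * (δ / A n) := by
        rw [nsmul_eq_mul, Nat.card_Ioc]; gcongr; exact_mod_cast Nat.sub_le n (A n)
    _ ≤ C * A n * (δ / A n) := by gcongr
    _ = C * δ := by field_simp
    _ < (|C| + 1) * δ := by nlinarith [le_abs_self C]
    _ = ε := by simp only [δ]; field_simp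

lemma tendsto_atTop_of_tendsto_div {A : ℕ → ℕ} {c : ℝ} (hc : 0 < c)
    (hAc : Tendsto (fun n => (A n : ℝ) / n) atTop (𝓝 c)) : Tendsto A atTop atTop := by
  rw [← tendsto_natCast_atTop_iff (R := ℝ)]
  refine (hAc.pos_mul_atTop hc tendsto_natCast_atTop_atTop).congr' ?_
  filter_upwards [eventually_gt_atTop 0] with n hn
  field_simp

theorem tendsto_prod_Ioc_of_tendsto_mul_log {f : ℕ → ℝ} (hf : ∀ k, 1 ≤ k → 0 < f k) {L : ℝ}
    (hfL : Tendsto (fun k : ℕ => k * log (f k)) atTop (𝓝 L))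
    {A : ℕ → ℕ} (hAn : ∀ n, A n ≤ n) {c : ℝ} (hc : 0 < c)
    (hAc : Tendsto (fun n => (A n : ℝ) / n) atTop (𝓝 c)) :
    Tendsto (fun n => ∏ k ∈ Ioc (A n) n, f k) atTop (𝓝 (c ^ (-L))) := by
  have hA := tendsto_atTop_of_tendsto_div hc hAc
  set E := fun k : ℕ => log (f k) - L * (log k - log ((k : ℝ) - 1))
  have hE : Tendsto (fun k : ℕ => k * E k) atTop (𝓝 0) := by
    have h := hfL.sub (tendsto_mul_log_sub_log_sub_one.const_mul L)
    rw [mul_one, sub_self] at h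
    exact h.congr fun k => by simp only [E]; ring
  have hC : ∀ᶠ n : ℕ in atTop, (n : ℝ) ≤ 2 / c * A n := by
    filter_upwards [hAc.eventually (lt_mem_nhds (half_lt_self hc)), eventually_gt_atTop 0]
      with n h hn
    rw [lt_div_iff₀ (by positivity)] at h
    rw [div_mul_eq_mul_div, le_div_iff₀ hc]
    linarith
  have hlog : Tendsto (fun n => ∑ k ∈ Ioc (A n) n, log (f k)) atTop (𝓝 (-L * log c)) := by
    have h := (tendsto_sum_Ioc_of_tendsto_mul hE hA hC).add
      (((continuousAt_log hc.ne').tendsto.comp hAc).const_mul (-L))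
    rw [zero_add] at h
    refine h.congr' ?_
    filter_upwards [hA.eventually_gt_atTop 0] with n hA0
    have hn0 : 0 < n := hA0.trans_le (hAn n)
    simp only [Function.comp_apply, E, sum_sub_distrib, ← mul_sum,
      sum_Ioc_log_sub_log_sub_one (hAn n)]
    rw [log_div (by positivity) (by positivity)]
    ring
  rw [rpow_def_of_pos hc, mul_comm]
  refine ((continuous_exp.tendsto _).comp hlog).congr fun n => ?_
  rw [Function.comp_apply, exp_sum]
  exact prod_congr rfl fun k hk => exp_log (hf k (by have := (mem_Ioc.1 hk).1; omega))

lemma cast_factorial_eq_prod_Icc (n : ℕ) : (n.factorial : ℝ) = ∏ k ∈ Icc 1 n, (k : ℝ) := by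
  rw [← prod_Ico_id_eq_factorial, Nat.cast_prod, Ico_add_one_right_eq_Icc]

lemma prod_Icc_div_prod_Icc {g : ℕ → ℝ} {A n : ℕ} (h : A ≤ n) (hg : ∀ k ∈ Icc 1 A, g k ≠ 0) :
    (∏ k ∈ Icc 1 n, g k) / ∏ k ∈ Icc 1 A, g k = ∏ k ∈ Ioc A n, g k := by
  have hIcc : ∀ N, Icc 1 N = Ioc 0 N := Icc_add_one_left_eq_Ioc 0
  rw [div_eq_iff (prod_ne_zero_iff.2 hg), hIcc, hIcc, ← prod_Ioc_consecutive g (Nat.zero_le A) h,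
    mul_comm]

lemma factorial_mul_prod_div_eq_prod_Ioc {w : ℕ → ℝ} (hw : ∀ k, 1 ≤ k → w k ≠ 0) {A n : ℕ}
    (h : A ≤ n) :
    (n.factorial : ℝ) * (∏ k ∈ Icc 1 A, w k) / ((A.factorial : ℝ) * ∏ k ∈ Icc 1 n, w k)
      = ∏ k ∈ Ioc A n, (k : ℝ) / w k := by
  have hw' : ∀ N, ∀ k ∈ Icc 1 N, w k ≠ 0 := fun N k hk => hw k (mem_Icc.1 hk).1
  have hk : ∀ k ∈ Icc 1 A, (k : ℝ) ≠ 0 := fun k hk => by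
    have := (mem_Icc.1 hk).1; positivity
  rw [prod_div_distrib, ← prod_Icc_div_prod_Icc h hk, ← prod_Icc_div_prod_Icc h (hw' A),
    ← cast_factorial_eq_prod_Icc, ← cast_factorial_eq_prod_Icc]
  have := prod_ne_zero_iff.2 (hw' n)
  have := prod_ne_zero_iff.2 (hw' A)
  field_simp

lemma tendsto_mul_log_div_add_sub_one {θ : ℕ → ℝ} {ϑ : ℝ} (hθ : Tendsto θ atTop (𝓝 ϑ)) :
    Tendsto (fun k : ℕ => k * log (k / (θ k + k - 1))) atTop (𝓝 (1 - ϑ)) := by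
  have h := (tendsto_mul_log_one_add_div (hθ.sub_const 1)).neg
  rw [neg_sub] at h
  refine h.congr' ?_
  filter_upwards [eventually_gt_atTop 0] with k hk
  rw [show (k : ℝ) / (θ k + k - 1) = (1 + (θ k - 1) / k)⁻¹ by
    rw [one_add_div (by positivity), inv_div]; ring, log_inv]
  ring

theorem tendsto_factorial_mul_prod_div {θ : ℕ → ℝ} (hθpos : ∀ i, 1 ≤ i → 0 < θ i) {ϑ : ℝ}
    (hθ : Tendsto θ atTop (𝓝 ϑ)) {A : ℕ → ℕ} (hAn : ∀ n, A n ≤ n) {c : ℝ} (hc : 0 < c)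
    (hAc : Tendsto (fun n => (A n : ℝ) / n) atTop (𝓝 c)) :
    Tendsto (fun n : ℕ => (n.factorial : ℝ) * (∏ k ∈ Icc 1 (A n), (θ k + (k : ℝ) - 1))
        / (((A n).factorial : ℝ) * ∏ k ∈ Icc 1 n, (θ k + (k : ℝ) - 1)))
      atTop (𝓝 (c ^ (ϑ - 1))) := by
  have hw : ∀ k, 1 ≤ k → 0 < θ k + (k : ℝ) - 1 := fun k hk => by
    have : (1 : ℝ) ≤ k := by exact_mod_cast hk
    linarith [hθpos k hk]
  have h := tendsto_prod_Ioc_of_tendsto_mul_log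
    (fun k hk => div_pos (by positivity) (hw k hk)) (tendsto_mul_log_div_add_sub_one hθ) hAn hc hAc
  rw [neg_sub] at h
  exact h.congr fun n => (factorial_mul_prod_div_eq_prod_Ioc (fun k hk => (hw k hk).ne') (hAn n)).symm

lemma tendsto_natCast_sub_div {m : ℕ → ℕ} {s : ℝ} (hs : s < 1)
    (hm : Tendsto (fun n => (m n : ℝ) / n) atTop (𝓝 s)) :
    Tendsto (fun n => ((n - m n : ℕ) : ℝ) / n) atTop (𝓝 (1 - s)) := by
  refine (tendsto_const_nhds.sub hm).congr' ?_
  filter_upwards [hm.eventually (gt_mem_nhds hs), eventually_gt_atTop 0] with n h hn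
  have hn : (0 : ℝ) < n := by exact_mod_cast hn
  have : m n ≤ n := by rw [div_lt_one hn] at h; exact_mod_cast h.le
  rw [Nat.cast_sub this]
  field_simp

lemma tendsto_natCast_div_sub {u : ℕ → ℝ} {y : ℝ} (hy : y ≠ 1)
    (hu : Tendsto (fun n => u n / n) atTop (𝓝 y)) :
    Tendsto (fun n : ℕ => (n : ℝ) / (n - u n)) atTop (𝓝 (1 - y)⁻¹) := by
  refine ((tendsto_const_nhds.sub hu).inv₀ (sub_ne_zero.2 hy.symm)).congr' ?_
  filter_upwards [eventually_gt_atTop 0] with n hn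
  rw [one_sub_div (by positivity), inv_div]

lemma tendsto_natCast_sum_floor_mul_div {ι : Type*} (T : Finset ι) {x : ι → ℝ}
    (hx : ∀ t ∈ T, 0 ≤ x t) :
    Tendsto (fun n : ℕ => ((∑ t ∈ T, ⌊(n : ℝ) * x t⌋₊ : ℕ) : ℝ) / n) atTop
      (𝓝 (∑ t ∈ T, x t)) := by
  have h : ∀ t ∈ T, Tendsto (fun n : ℕ => (⌊(n : ℝ) * x t⌋₊ : ℝ) / n) atTop (𝓝 (x t)) :=
    fun t ht => ((tendsto_nat_floor_mul_div_atTop (hx t ht)).comp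
      tendsto_natCast_atTop_atTop).congr fun n => by rw [Function.comp_apply, mul_comm]
  simpa only [Nat.cast_sum, sum_div] using tendsto_finsetSum T h

lemma prod_range_one_sub_sum_lt {r : ℕ} (x : Fin r → ℝ) :
    ∏ j ∈ range r, (1 - ∑ t ∈ univ.filter (fun t : Fin r => (t : ℕ) < j), x t)
      = ∏ j ∈ range (r - 1), (1 - ∑ t ∈ univ.filter (fun t : Fin r => (t : ℕ) ≤ j), x t) := by
  rcases r with _ | r
  · simp
  rw [prod_range_succ', Nat.add_sub_cancel]
  simp

theorem stmt18_general (θ : ℕ → ℝ) (hθpos : ∀ i, 1 ≤ i → 0 < θ i)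
    (ϑ : ℝ) (hθlim : Tendsto θ atTop (nhds ϑ))
    (r : ℕ) (x : Fin r → ℝ) (hx : ∀ t, 0 < x t)
    (hsum : ∑ t, x t < 1)
    (a : ℕ → Fin r → ℕ) (ha : ∀ n t, a n t = Nat.floor ((n : ℝ) * x t))
    (m : ℕ → ℕ) (hm : ∀ n, m n = ∑ t, a n t) :
    Tendsto (fun n : ℕ =>
      (n : ℝ) ^ r
        * ((n.factorial : ℝ) * (∏ k ∈ Finset.Icc 1 (n - m n), (θ k + (k : ℝ) - 1))
            / (((n - m n).factorial : ℝ) * ∏ k ∈ Finset.Icc 1 n, (θ k + (k : ℝ) - 1)))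
        * (∏ j : Fin r,
            θ (n + 1 - ∑ t ∈ Finset.univ.filter (fun t : Fin r => t ≤ j), a n t))
        / ∏ j ∈ Finset.range r,
            ((n : ℝ) - ∑ t ∈ Finset.univ.filter (fun t : Fin r => (t : ℕ) < j), a n t))
      atTop
      (nhds (ϑ ^ r * (1 - ∑ t, x t) ^ (ϑ - 1)
        / ∏ j ∈ Finset.range (r - 1),
            (1 - ∑ t ∈ Finset.univ.filter (fun t : Fin r => (t : ℕ) ≤ j), x t))) := by
  have hS : ∀ T : Finset (Fin r), Tendsto (fun n : ℕ => ((∑ t ∈ T, a n t : ℕ) : ℝ) / n) atTop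
      (𝓝 (∑ t ∈ T, x t)) := fun T => by
    simpa only [ha] using tendsto_natCast_sum_floor_mul_div T fun t _ => (hx t).le
  have hX : ∀ T : Finset (Fin r), ∑ t ∈ T, x t < 1 := fun T =>
    (sum_le_sum_of_subset_of_nonneg (subset_univ T) fun t _ _ => (hx t).le).trans_lt hsum
  have hmn : Tendsto (fun n : ℕ => (m n : ℝ) / n) atTop (𝓝 (∑ t, x t)) := by
    simp only [hm]
    exact hS univ
  have hA := tendsto_natCast_sub_div hsum hmn
  have hF := tendsto_factorial_mul_prod_div hθpos hθlim (fun n => Nat.sub_le n (m n))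
    (sub_pos.2 hsum) hA
  have hΘ : Tendsto (fun n : ℕ => ∏ j : Fin r,
      θ (n + 1 - ∑ t ∈ univ.filter (fun t : Fin r => t ≤ j), a n t)) atTop (𝓝 (ϑ ^ r)) := by
    have hmono : ∀ n j, n - m n ≤ n + 1 - ∑ t ∈ univ.filter (fun t : Fin r => t ≤ j), a n t :=
      fun n j => by
        have := hm n ▸ sum_le_sum_of_subset (filter_subset (fun t : Fin r => t ≤ j) univ)
        omega
    simpa using tendsto_finsetProd univ fun j _ => hθlim.comp <|
      tendsto_atTop_mono (fun n => hmono n j) (tendsto_atTop_of_tendsto_div (sub_pos.2 hsum) hA)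
  have hD := tendsto_finsetProd (range r) fun j _ => tendsto_natCast_div_sub (hX _).ne
    (hS (univ.filter fun t : Fin r => (t : ℕ) < j))
  have h := (hF.mul hΘ).mul hD
  rw [prod_inv_distrib, prod_range_one_sub_sum_lt] at h
  convert h using 2
  · rw [prod_div_distrib, prod_const, card_range]
    ring
  · ring

/-- GEM limit for the ordered cycle lengths of the generalized Feller
coupling: the probability of the first `r` cycles having sizes `⌊n x_1⌋, …, ⌊n x_r⌋`,
scaled by `n^r`, converges to the GEM(θ) density. -/
theorem stmt18 (θ : ℕ → ℝ) (hθpos : ∀ i, 1 ≤ i → 0 < θ i)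
    (ϑ : ℝ) (hϑ : 0 < ϑ) (hθlim : Tendsto θ atTop (nhds ϑ))
    (r : ℕ) (hr : 1 ≤ r) (x : Fin r → ℝ) (hx : ∀ t, 0 < x t)
    (hsum : ∑ t, x t < 1)
    (a : ℕ → Fin r → ℕ) (ha : ∀ n t, a n t = Nat.floor ((n : ℝ) * x t))
    (m : ℕ → ℕ) (hm : ∀ n, m n = ∑ t, a n t) :
    Tendsto (fun n : ℕ =>
      (n : ℝ) ^ r
        * ((n.factorial : ℝ) * (∏ k ∈ Finset.Icc 1 (n - m n), (θ k + (k : ℝ) - 1))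
            / (((n - m n).factorial : ℝ) * ∏ k ∈ Finset.Icc 1 n, (θ k + (k : ℝ) - 1)))
        * (∏ j : Fin r,
            θ (n + 1 - ∑ t ∈ Finset.univ.filter (fun t : Fin r => t ≤ j), a n t))
        / ∏ j ∈ Finset.range r,
            ((n : ℝ) - ∑ t ∈ Finset.univ.filter (fun t : Fin r => (t : ℕ) < j), a n t))
      atTop
      (nhds (ϑ ^ r * (1 - ∑ t, x t) ^ (ϑ - 1)
        / ∏ j ∈ Finset.range (r - 1),
            (1 - ∑ t ∈ Finset.univ.filter (fun t : Fin r => (t : ℕ) ≤ j), x t))) :=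
  stmt18_general θ hθpos ϑ hθlim r x hx hsum a ha m hm
end

section
/- Let θ > 0 and set θ*_3 = θ and θ*_i = θ(1 + θ/(i−2)) for i ≥ 4. Fix i ≥ 4 and define δ_{i,n} for n ≥ i by: δ_{i,i} = (i−1)/(i−1+θ*_i), δ_{i,i+1} = δ_{i,i} · i/(i+θ*_{i+1}), and δ_{i,n} = ((n−1)/(n−1+θ*_n)) · ( δ_{i,n−1} + (θ*_{n−1}/(n−2+θ*_{n−1}))·δ_{i,n−2} ) for n ≥ i+2. Then δ_{i,∞} := lim_{n→∞} δ_{i,n} exists and δ_{i,∞} = M(1, θ+i−1, −θ) · B(z_1(θ)+i−3, z_2(θ)+i−3) / B(i−2, θ+i−1), where M(1, b, z) := Σ_{j=0}^{∞} z^j/(b)_{(j)} is the confluent hypergeometric function, B(w_1, w_2) := Γ(w_1)Γ(w_2)/Γ(w_1+w_2) with Γ the complex Gamma function, and z_1(θ) = (3+θ − √((1−θ)(1+3θ)))/2, z_2(θ) = (3+θ + √((1−θ)(1+3θ)))/2 (complex square root; z_1, z_2 are complex conjugates when θ > 1, and the Beta ratio on the right-hand side is real). -/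
open Finset Filter Topology

/-- Rising factorial `(x)_{(j)} = x (x+1) ⋯ (x+j-1)`. -/
noncomputable def risingFac (x : ℝ) (j : ℕ) : ℝ := ∏ k ∈ Finset.range j, (x + k)

/-- Complex Beta function `B(w₁,w₂) = Γ(w₁)Γ(w₂)/Γ(w₁+w₂)`. -/
noncomputable def cBeta (w₁ w₂ : ℂ) : ℂ :=
  Complex.Gamma w₁ * Complex.Gamma w₂ / Complex.Gamma (w₁ + w₂)

/-!
Since `θ*_x = θ (x - 2 + θ) / (x - 2)`, the recursion reads
`δ_n = p_n (δ_{n-1} + q_{n-1} δ_{n-2})` with `p_x = (x-1)(x-2)/D_x`, `q_x = θ(x-2+θ)/D_x` and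
`D_x = (x-1)(x-2) + θ(x-2) + θ² = (x+z₁-3)(x+z₂-3)`. With `c_x = (x-1)(x-2+θ)/D_x` one has
`p_{x+1} (c_x + q_x) = c_x c_{x+1}` and `p_{x+1} q_x = c_x c_{x+1} θ/(θ+x-1)`; since `-θ/(θ+x-1)` is
also the ratio of consecutive terms of `M(1, θ+i-1, -θ)`, induction gives
`δ_{i+m} = δ_i · c_{i+1} ⋯ c_{i+m} · (m-th partial sum of M(1, θ+i-1, -θ))`.
By Euler's product for `Γ` the product of the `c_k` tends to
`Γ(i+z₁-2) Γ(i+z₂-2) / (Γ(i) Γ(i-1+θ))`, and the functional equation of `Γ` turns `δ_i` times this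
into the quotient of Beta values.
-/

theorem risingFac_succ (x : ℝ) (j : ℕ) : risingFac x (j + 1) = risingFac x j * (x + j) :=
  prod_range_succ _ _

theorem pow_div_risingFac_succ (z b : ℝ) (j : ℕ) :
    z ^ (j + 1) / risingFac b (j + 1) = z ^ j / risingFac b j * (z / (b + j)) := by
  rw [risingFac_succ, pow_succ, mul_div_mul_comm]

theorem summable_pow_div_risingFac (z : ℝ) {b : ℝ} (hb : 0 < b) :
    Summable fun j : ℕ => z ^ j / risingFac b j := by
  refine summable_of_ratio_norm_eventually_le (r := 1 / 2) (by norm_num) ?_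
  filter_upwards [eventually_ge_atTop ⌈2 * |z|⌉₊] with j hj
  have hj' : 2 * |z| ≤ j := Nat.ceil_le.mp hj
  have hbj : 0 < b + j := by positivity
  rw [pow_div_risingFac_succ, norm_mul, mul_comm]
  gcongr
  rw [norm_div, Real.norm_of_nonneg hbj.le, div_le_iff₀ hbj, Real.norm_eq_abs]
  linarith

/-- The partial sum of `M(1, b, z) = ∑ z ^ j / (b)_{(j)}` over `j ≤ m`. -/
noncomputable def kummerPartial (b z : ℝ) (m : ℕ) : ℝ := ∑ j ∈ range (m + 1), z ^ j / risingFac b j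

theorem kummerPartial_add_two (b z : ℝ) (m : ℕ) :
    kummerPartial b z (m + 2) =
      kummerPartial b z (m + 1) +
        (kummerPartial b z (m + 1) - kummerPartial b z m) * (z / (b + (m + 1))) := by
  simp only [kummerPartial, sum_range_succ _ (m + 2), sum_range_succ _ (m + 1),
    pow_div_risingFac_succ z b (m + 1)]
  push_cast
  ring

theorem kummerPartial_one (b z : ℝ) : kummerPartial b z 1 = 1 + z / b := by
  simp [kummerPartial, sum_range_succ, risingFac]

theorem tendsto_kummerPartial (z : ℝ) {b : ℝ} (hb : 0 < b) :
    Tendsto (kummerPartial b z) atTop (𝓝 (∑' j : ℕ, z ^ j / risingFac b j)) :=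
  (summable_pow_div_risingFac z hb).hasSum.tendsto_sum_nat.comp (tendsto_add_atTop_nat 1)

namespace Complex

theorem ne_neg_natCast_of_re_pos {s : ℂ} (hs : 0 < s.re) (m : ℕ) : s ≠ -m := by
  rintro rfl
  simp only [neg_re, natCast_re, Left.neg_pos_iff] at hs
  linarith [m.cast_nonneg (α := ℝ)]

theorem prod_range_add_ne_zero {s : ℂ} (hs : ∀ m : ℕ, s ≠ -m) (n : ℕ) :
    ∏ j ∈ range n, (s + j) ≠ 0 :=
  prod_ne_zero_iff.mpr fun j _ h => hs j (eq_neg_of_add_eq_zero_left h)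

/-- Euler's limit `GammaSeq s n → Γ(s)` for `s = a, b, c, d`; the condition `a + b = c + d` makes
the powers `n ^ s` in `GammaSeq` cancel. -/
theorem tendsto_prod_ratio_Gamma {a b c d : ℂ} (habcd : a + b = c + d)
    (ha : ∀ m : ℕ, a ≠ -m) (hb : ∀ m : ℕ, b ≠ -m) (hc : ∀ m : ℕ, c ≠ -m) (hd : ∀ m : ℕ, d ≠ -m) :
    Tendsto (fun N : ℕ => ∏ j ∈ range N, (a + j) * (b + j) / ((c + j) * (d + j))) atTop
      (𝓝 (Gamma c * Gamma d / (Gamma a * Gamma b))) := by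
  have hlim := ((GammaSeq_tendsto_Gamma c).mul (GammaSeq_tendsto_Gamma d)).div
    ((GammaSeq_tendsto_Gamma a).mul (GammaSeq_tendsto_Gamma b))
    (mul_ne_zero (Gamma_ne_zero ha) (Gamma_ne_zero hb))
  refine (tendsto_add_atTop_iff_nat 1).mp (hlim.congr' ?_)
  filter_upwards [eventually_ne_atTop 0] with n hn
  have hn' : (n : ℂ) ≠ 0 := Nat.cast_ne_zero.mpr hn
  have hcpow : ∀ s : ℂ, (n : ℂ) ^ s ≠ 0 := fun s => by simp [cpow_eq_zero_iff, hn']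
  simp only [Pi.div_apply, GammaSeq, prod_div_distrib, prod_mul_distrib]
  field_simp [hcpow a, hcpow b, Nat.cast_ne_zero.mpr n.factorial_ne_zero,
    prod_range_add_ne_zero ha, prod_range_add_ne_zero hb, prod_range_add_ne_zero hc,
    prod_range_add_ne_zero hd]
  rw [← cpow_add _ _ hn', ← cpow_add _ _ hn', habcd]

end Complex

theorem cBeta_div_cBeta_of_add_eq {u v a b : ℂ} (h : u + v = a + b)
    (hab : Complex.Gamma (a + b) ≠ 0) :
    cBeta u v / cBeta a b =
      Complex.Gamma u * Complex.Gamma v / (Complex.Gamma a * Complex.Gamma b) := by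
  unfold cBeta; rw [h, div_div_div_cancel_right₀ hab]

noncomputable section

namespace FellerCoupling

variable (θ : ℝ)

def thetaStar (x : ℝ) : ℝ := θ * (1 + θ / (x - 2))

/-- `P(ξ_x = 0)` for the Feller-type coupling; `probOne θ x = P(ξ_x = 1)`. -/
def probZero (x : ℝ) : ℝ := (x - 1) / (x - 1 + thetaStar θ x)

def probOne (x : ℝ) : ℝ := thetaStar θ x / (x - 1 + thetaStar θ x)

def den (x : ℝ) : ℝ := (x - 1) * (x - 2) + θ * (x - 2) + θ ^ 2

def factor (x : ℝ) : ℝ := (x - 1) * (x - 2 + θ) / den θ x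

variable {θ}

theorem den_pos (hθ : 0 < θ) {x : ℝ} (hx : 2 ≤ x) : 0 < den θ x := by
  unfold den; nlinarith

theorem sub_one_add_thetaStar {x : ℝ} (hx : x ≠ 2) :
    x - 1 + thetaStar θ x = den θ x / (x - 2) := by
  have : x - 2 ≠ 0 := sub_ne_zero.mpr hx
  unfold thetaStar den; field_simp; ring

theorem probZero_eq {x : ℝ} (hx : 2 < x) :
    probZero θ x = (x - 1) * (x - 2) / den θ x := by
  rw [probZero, sub_one_add_thetaStar hx.ne', div_div_eq_mul_div]

theorem probOne_eq {x : ℝ} (hx : 2 < x) :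
    probOne θ x = θ * (x - 2 + θ) / den θ x := by
  have : x - 2 ≠ 0 := sub_ne_zero.mpr hx.ne'
  rw [probOne, sub_one_add_thetaStar hx.ne', thetaStar]
  field_simp

theorem probZero_succ_eq_factor_mul (hθ : 0 < θ) {x : ℝ} (hx : 1 < x) :
    probZero θ (x + 1) = factor θ (x + 1) * (1 + -θ / (θ + x - 1)) := by
  have := den_pos hθ (x := x + 1) (by linarith)
  have : θ + x - 1 ≠ 0 := by linarith
  rw [probZero_eq (by linarith), factor]
  field_simp
  ring

theorem probZero_succ_mul_factor_add_probOne (hθ : 0 < θ) {x : ℝ} (hx : 2 < x) :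
    probZero θ (x + 1) * (factor θ x + probOne θ x) = factor θ x * factor θ (x + 1) := by
  have := den_pos hθ hx.le
  have := den_pos hθ (x := x + 1) (by linarith)
  rw [probZero_eq (by linarith), probOne_eq hx, factor, factor]
  field_simp
  ring

theorem probZero_succ_mul_probOne (hθ : 0 < θ) {x : ℝ} (hx : 2 < x) :
    probZero θ (x + 1) * probOne θ x = factor θ x * factor θ (x + 1) * (θ / (θ + x - 1)) := by
  have := den_pos hθ hx.le
  have := den_pos hθ (x := x + 1) (by linarith)
  have : θ + x - 1 ≠ 0 := by linarith
  rw [probZero_eq (by linarith), probOne_eq hx, factor, factor]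
  field_simp
  ring

theorem eq_mul_prod_factor_mul_kummerPartial (hθ : 0 < θ) {i : ℕ} (hi : 2 ≤ i) {δ : ℕ → ℝ}
    (h₁ : δ (i + 1) = δ i * probZero θ (i + 1))
    (hrec : ∀ n, i ≤ n →
      δ (n + 2) = probZero θ (n + 2) * (δ (n + 1) + probOne θ (n + 1) * δ n))
    (m : ℕ) :
    δ (i + m) =
      δ i * (∏ k ∈ range m, factor θ (i + 1 + k)) * kummerPartial (θ + i - 1) (-θ) m := by
  have hi' : (2 : ℝ) ≤ i := by exact_mod_cast hi
  induction m using Nat.strong_induction_on with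
  | _ m ih =>
  match m with
  | 0 => simp [kummerPartial, risingFac]
  | 1 =>
    rw [h₁, probZero_succ_eq_factor_mul hθ (by linarith), kummerPartial_one]
    simp only [range_one, prod_singleton, CharP.cast_eq_zero, add_zero]
    ring
  | m + 2 =>
    have hx : (2 : ℝ) < i + 1 + m := by have := m.cast_nonneg (α := ℝ); linarith
    have e₁ : ((i + m : ℕ) : ℝ) + 1 = i + 1 + m := by push_cast; ring
    have e₂ : ((i + m : ℕ) : ℝ) + 2 = i + 1 + m + 1 := by push_cast; ring
    have e₃ : (i : ℝ) + 1 + ((m + 1 : ℕ) : ℝ) = i + 1 + m + 1 := by push_cast; ring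
    rw [← add_assoc, hrec _ (by omega), show i + m + 1 = i + (m + 1) by omega,
      ih m (by omega), ih (m + 1) (by omega), prod_range_succ _ (m + 1), prod_range_succ _ m,
      kummerPartial_add_two, e₁, e₂, e₃]
    linear_combination
      (δ i * (∏ k ∈ range m, factor θ (i + 1 + k)) * kummerPartial (θ + i - 1) (-θ) (m + 1)) *
        probZero_succ_mul_factor_add_probOne hθ hx -
      (δ i * (∏ k ∈ range m, factor θ (i + 1 + k)) *
        (kummerPartial (θ + i - 1) (-θ) (m + 1) - kummerPartial (θ + i - 1) (-θ) m)) *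
        probZero_succ_mul_probOne hθ hx

def sqrtDisc (θ : ℝ) : ℂ := (((1 - θ) * (1 + 3 * θ) : ℝ) : ℂ) ^ ((1 : ℂ) / 2)

def root₁ (θ : ℝ) : ℂ := (3 + θ - sqrtDisc θ) / 2

def root₂ (θ : ℝ) : ℂ := (3 + θ + sqrtDisc θ) / 2

theorem sqrtDisc_mul_self (θ : ℝ) : sqrtDisc θ * sqrtDisc θ = (1 - θ) * (1 + 3 * θ) := by
  rw [← sq, sqrtDisc, one_div, Complex.cpow_ofNat_inv_pow]
  push_cast; ring

theorem sqrtDisc_re_nonneg (θ : ℝ) : 0 ≤ (sqrtDisc θ).re := by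
  rw [sqrtDisc, one_div, Complex.cpow_inv_two_re]
  positivity

theorem sqrtDisc_re_lt (hθ : -3 < θ) : (sqrtDisc θ).re < 3 + θ := by
  rw [sqrtDisc, one_div, Complex.cpow_inv_two_re, Real.sqrt_lt' (by linarith), Complex.norm_real,
    Complex.ofReal_re, Real.norm_eq_abs]
  rcases abs_cases ((1 - θ) * (1 + 3 * θ)) with ⟨h, _⟩ | ⟨h, _⟩ <;> rw [h] <;>
    nlinarith [sq_nonneg θ]

theorem root₁_add_root₂ (θ : ℝ) : root₁ θ + root₂ θ = 3 + θ := by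
  unfold root₁ root₂; ring

theorem root₁_mul_root₂ (θ : ℝ) : root₁ θ * root₂ θ = 2 + θ + θ ^ 2 := by
  unfold root₁ root₂; linear_combination (-1 / 4 : ℂ) * sqrtDisc_mul_self θ

theorem root₁_re_pos (hθ : -3 < θ) : 0 < (root₁ θ).re := by
  have := sqrtDisc_re_lt hθ
  simp only [root₁, Complex.div_ofNat_re, Complex.sub_re, Complex.add_re, Complex.ofReal_re]
  norm_num; linarith

theorem root₂_re_pos (hθ : -3 < θ) : 0 < (root₂ θ).re := by
  have := sqrtDisc_re_nonneg θ
  simp only [root₂, Complex.div_ofNat_re, Complex.add_re, Complex.ofReal_re]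
  norm_num; linarith

theorem ofReal_den (θ x : ℝ) : (den θ x : ℂ) = (x + root₁ θ - 3) * (x + root₂ θ - 3) := by
  unfold den
  push_cast
  linear_combination (3 - x) * root₁_add_root₂ θ - root₁_mul_root₂ θ

theorem tendsto_prod_factor (hθ : 0 < θ) {i : ℕ} (hi : 2 ≤ i) :
    Tendsto (fun m : ℕ => ((∏ k ∈ range m, factor θ (i + 1 + k) : ℝ) : ℂ)) atTop
      (𝓝 (Complex.Gamma (i + root₁ θ - 2) * Complex.Gamma (i + root₂ θ - 2) /
        (Complex.Gamma i * Complex.Gamma (i - 1 + θ)))) := by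
  have hi' : (2 : ℝ) ≤ i := by exact_mod_cast hi
  have hre : ∀ {z : ℂ}, 0 < z.re → ∀ m : ℕ, (i : ℂ) + z - 2 ≠ -m := fun hz =>
    Complex.ne_neg_natCast_of_re_pos <| by
      simp only [Complex.sub_re, Complex.add_re, Complex.natCast_re, Complex.re_ofNat]; linarith
  have hsum : (i : ℂ) + (i - 1 + θ) = (i + root₁ θ - 2) + (i + root₂ θ - 2) := by
    linear_combination -root₁_add_root₂ θ
  convert Complex.tendsto_prod_ratio_Gamma hsum
    (Complex.ne_neg_natCast_of_re_pos (by simp only [Complex.natCast_re]; linarith))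
    (Complex.ne_neg_natCast_of_re_pos (by
      simp only [Complex.add_re, Complex.sub_re, Complex.natCast_re, Complex.one_re,
        Complex.ofReal_re]
      linarith))
    (hre (root₁_re_pos (by linarith))) (hre (root₂_re_pos (by linarith))) using 2 with m
  rw [Complex.ofReal_prod]
  refine prod_congr rfl fun k _ => ?_
  rw [factor, Complex.ofReal_div, ofReal_den]
  push_cast
  ring

theorem probZero_mul_Gamma_ratio (hθ : 0 < θ) {i : ℕ} (hi : 3 ≤ i) :
    (probZero θ i : ℂ) * (Complex.Gamma (i + root₁ θ - 2) * Complex.Gamma (i + root₂ θ - 2) /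
        (Complex.Gamma i * Complex.Gamma (i - 1 + θ))) =
      cBeta (root₁ θ + i - 3) (root₂ θ + i - 3) / cBeta (i - 2) (θ + i - 1) := by
  have hi' : (3 : ℝ) ≤ i := by exact_mod_cast hi
  have hre : ∀ {z : ℂ}, 0 < z.re → (i : ℂ) + z - 3 ≠ 0 := fun hz =>
    Complex.ne_zero_of_re_pos <| by
      simp only [Complex.sub_re, Complex.add_re, Complex.natCast_re, Complex.re_ofNat]; linarith
  have hu := hre (root₁_re_pos (by linarith))
  have hv := hre (root₂_re_pos (by linarith))
  have hi₂ : (i : ℂ) - 2 ≠ 0 := sub_ne_zero.mpr (by exact_mod_cast (by omega : i ≠ 2))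
  have hi₁ : (i : ℂ) - 2 + 1 ≠ 0 := by
    rw [show (i : ℂ) - 2 + 1 = i - 1 by ring, sub_ne_zero]; exact_mod_cast (by omega : i ≠ 1)
  have hΓ₁ : Complex.Gamma (i + root₁ θ - 2) =
      (i + root₁ θ - 3) * Complex.Gamma (root₁ θ + i - 3) := by
    rw [show root₁ θ + (i : ℂ) - 3 = i + root₁ θ - 3 by ring, ← Complex.Gamma_add_one _ hu]
    congr 1; ring
  have hΓ₂ : Complex.Gamma (i + root₂ θ - 2) =
      (i + root₂ θ - 3) * Complex.Gamma (root₂ θ + i - 3) := by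
    rw [show root₂ θ + (i : ℂ) - 3 = i + root₂ θ - 3 by ring, ← Complex.Gamma_add_one _ hv]
    congr 1; ring
  have hΓi : Complex.Gamma i = (i - 2 + 1) * ((i - 2) * Complex.Gamma (i - 2)) := by
    rw [← Complex.Gamma_add_one _ hi₂, ← Complex.Gamma_add_one _ hi₁]; congr 1; ring
  have hΓ_ne : ∀ {s : ℂ}, 0 < s.re → Complex.Gamma s ≠ 0 := Complex.Gamma_ne_zero_of_re_pos
  have := hΓ_ne (s := i - 2) (by
    simp only [Complex.sub_re, Complex.natCast_re, Complex.re_ofNat]; linarith)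
  have := hΓ_ne (s := θ + i - 1) (by
    simp only [Complex.add_re, Complex.sub_re, Complex.natCast_re, Complex.ofReal_re,
      Complex.one_re]
    linarith)
  rw [cBeta_div_cBeta_of_add_eq (by linear_combination root₁_add_root₂ θ) (hΓ_ne (by
      simp only [Complex.add_re, Complex.sub_re, Complex.natCast_re, Complex.re_ofNat,
        Complex.ofReal_re, Complex.one_re]
      linarith)),
    probZero_eq (by linarith), Complex.ofReal_div, ofReal_den, hΓ₁, hΓ₂, hΓi,
    show (i : ℂ) - 1 + θ = θ + i - 1 by ring]
  push_cast
  field_simp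
  ring

end FellerCoupling

end

open FellerCoupling

theorem stmt19_general (θ : ℝ) (hθ : 0 < θ)
    (θs : ℕ → ℝ)
    (hθs : ∀ j : ℕ, 4 ≤ j → θs j = θ * (1 + θ / ((j : ℝ) - 2)))
    (i : ℕ) (hi : 4 ≤ i)
    (δ : ℕ → ℝ)
    (hδ0 : δ i = ((i : ℝ) - 1) / ((i : ℝ) - 1 + θs i))
    (hδ1 : δ (i + 1) = δ i * (i : ℝ) / ((i : ℝ) + θs (i + 1)))
    (hδrec : ∀ n : ℕ, i + 2 ≤ n →
      δ n = (((n : ℝ) - 1) / ((n : ℝ) - 1 + θs n))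
        * (δ (n - 1) + (θs (n - 1) / ((n : ℝ) - 2 + θs (n - 1))) * δ (n - 2))) :
    Tendsto (fun n : ℕ => (δ n : ℂ)) atTop (nhds
      (((∑' j : ℕ, (-θ) ^ j / risingFac (θ + i - 1) j : ℝ) : ℂ)
        * (cBeta ((3 + θ - ((((1 - θ) * (1 + 3 * θ) : ℝ) : ℂ)) ^ ((1 : ℂ) / 2)) / 2
              + (i : ℂ) - 3)
            ((3 + θ + ((((1 - θ) * (1 + 3 * θ) : ℝ) : ℂ)) ^ ((1 : ℂ) / 2)) / 2
              + (i : ℂ) - 3)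
          / cBeta ((i : ℂ) - 2) ((θ : ℂ) + (i : ℂ) - 1)))) := by
  have hθs' : ∀ n : ℕ, i ≤ n → θs n = thetaStar θ n := fun n hn => hθs n (by omega)
  have h₀ : δ i = probZero θ i := by rw [hδ0, hθs' i le_rfl, probZero]
  have h₁ : δ (i + 1) = δ i * probZero θ (i + 1) := by
    rw [hδ1, hθs' (i + 1) (by omega), probZero]; push_cast; ring
  have hrec : ∀ n, i ≤ n →
      δ (n + 2) = probZero θ (n + 2) * (δ (n + 1) + probOne θ (n + 1) * δ n) := by
    intro n hn
    rw [hδrec (n + 2) (by omega), Nat.add_sub_cancel, show n + 2 - 1 = n + 1 by omega,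
      hθs' (n + 2) (by omega), hθs' (n + 1) (by omega), probZero, probOne]
    push_cast; ring
  have hb : 0 < θ + i - 1 := by
    have : (4 : ℝ) ≤ i := by exact_mod_cast hi
    linarith
  have hlim := ((tendsto_prod_factor hθ (i := i) (by omega)).const_mul (δ i : ℂ)).mul
    (tendsto_ofReal_iff.mpr (tendsto_kummerPartial (-θ) hb))
  rw [h₀, probZero_mul_Gamma_ratio hθ (by omega), mul_comm] at hlim
  refine (tendsto_add_atTop_iff_nat i).mp (hlim.congr fun m => ?_)
  rw [add_comm m, eq_mul_prod_factor_mul_kummerPartial hθ (by omega) h₁ hrec m, ← h₀]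
  push_cast
  ring

/-- the limit `δ_{i,∞}` of the no-adjacent-ones tail probabilities of
the playground-game Feller-type coupling. -/
theorem stmt19 (θ : ℝ) (hθ : 0 < θ)
    (θs : ℕ → ℝ) (hθs3 : θs 3 = θ)
    (hθs : ∀ j : ℕ, 4 ≤ j → θs j = θ * (1 + θ / ((j : ℝ) - 2)))
    (i : ℕ) (hi : 4 ≤ i)
    (δ : ℕ → ℝ)
    (hδ0 : δ i = ((i : ℝ) - 1) / ((i : ℝ) - 1 + θs i))
    (hδ1 : δ (i + 1) = δ i * (i : ℝ) / ((i : ℝ) + θs (i + 1)))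
    (hδrec : ∀ n : ℕ, i + 2 ≤ n →
      δ n = (((n : ℝ) - 1) / ((n : ℝ) - 1 + θs n))
        * (δ (n - 1) + (θs (n - 1) / ((n : ℝ) - 2 + θs (n - 1))) * δ (n - 2))) :
    Tendsto (fun n : ℕ => (δ n : ℂ)) atTop (nhds
      (((∑' j : ℕ, (-θ) ^ j / risingFac (θ + i - 1) j : ℝ) : ℂ)
        * (cBeta ((3 + θ - ((((1 - θ) * (1 + 3 * θ) : ℝ) : ℂ)) ^ ((1 : ℂ) / 2)) / 2
              + (i : ℂ) - 3)
            ((3 + θ + ((((1 - θ) * (1 + 3 * θ) : ℝ) : ℂ)) ^ ((1 : ℂ) / 2)) / 2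
              + (i : ℂ) - 3)
          / cBeta ((i : ℂ) - 2) ((θ : ℂ) + (i : ℂ) - 1)))) :=
  stmt19_general θ hθ θs hθs i hi δ hδ0 hδ1 hδrec
end
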